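/- If T is a tree of order ω² on B_{X₁} \ {0} (the nonzero vectors of the unit ball of the Schreier space X₁), then for any ε > 0 there exist a node (x_i)_{i=1}^n ∈ T and scalars (a_i)_{i=1}^n with ∑|aᵢ| = 1 and ‖∑_{i=1}^n aᵢxᵢ‖_{X₁} < ε. Consequently, there is no ℓ₁-K-tree of order ω² on X₁ for any K, i.e. I(X₁) ≤ ω². -/

import Mathlib

/-!
A vector in the unit ball of `X₁` has at most `4 / θ` coordinates `j ≥ 1` of modulus `> θ`.
Hence, by a weak sunflower argument and pigeonhole, sufficiently many such vectors have a signed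
average that is small at every coordinate `j ≥ 1`. A node of `T^{ω·(t+1)}` extends by any number
of entries inside `T^{ω·t}`, so from a node of `T^{ω·n}` one can take, along one branch, `n`
successive such averages ("layers"), the coordinates of each layer small compared with `1 / R`,
where `R` bounds the supports of the earlier layers. An admissible set `E` then sums to at most
`1` on the first layer whose support reaches `min E`, to `0` on the layers before it and to almost
nothing on the later ones, because `|E| ≤ min E`. The average of the `n` layers therefore has norm
about `2 / n`, which an `ℓ₁-K`-tree forbids.
-/

/-- The derived tree of a tree of finite sequences (ordered by extension):
remove all maximal elements. -/
def derivedTree {X : Type*} (T : Set (List X)) : Set (List X) :=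
  {l ∈ T | ∃ l' ∈ T, l <+: l' ∧ l ≠ l'}

/-- Transfinite iterates `T^α` of the derivation. -/
noncomputable def derivTreeIter {X : Type*} (T : Set (List X)) : Ordinal → Set (List X) :=
  fun o =>
    Ordinal.limitRecOn o T (fun _ S => derivedTree S)
      (fun o _ ih => ⋂ (β : Ordinal) (h : β < o), ih β h)

/-- The order of a tree: the least `α` with `T^α = ∅`. -/
noncomputable def treeOrder {X : Type*} (T : Set (List X)) : Ordinal :=
  sInf {o : Ordinal | derivTreeIter T o = ∅}

/-- The Schreier-space norm on finitely supported sequences: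
`‖∑ aᵢeᵢ‖ = sup_{E ∈ S₁} |∑_{i∈E} aᵢ|`, where `S₁ = {F : |F| ≤ min F}`.  (For a
finitely supported `a` it suffices to take admissible `E` inside the support.) -/
noncomputable def schNorm (a : ℕ →₀ ℝ) : ℝ :=
  ((a.support.powerset).filter (fun E => ∀ n ∈ E, E.card ≤ n)).sup'
    ⟨∅, by simp⟩ (fun E => |∑ i ∈ E, a i|)

/-- The supremum norm `‖∑ aᵢeᵢ‖_∞ = sup_i |aᵢ|` of a finitely supported sequence. -/
noncomputable def supNorm (a : ℕ →₀ ℝ) : ℝ :=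
  (insert 0 a.support).sup' (Finset.insert_nonempty _ _) (fun i => |a i|)

open Finset
open scoped Ordinal

universe u

section Trees

variable {X : Type*} (T : Set (List X))

lemma derivTreeIter_zero : derivTreeIter T 0 = T := by
  simp [derivTreeIter]

lemma derivTreeIter_succ (o : Ordinal) :
    derivTreeIter T (Order.succ o) = derivedTree (derivTreeIter T o) := by
  simp [derivTreeIter, Ordinal.limitRecOn_add_one]

lemma derivTreeIter_of_isSuccLimit {o : Ordinal} (h : Order.IsSuccLimit o) :
    derivTreeIter T o = ⋂ β < o, derivTreeIter T β := by
  rw [derivTreeIter, Ordinal.limitRecOn_limit _ _ _ _ h]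
  rfl

lemma antitone_derivTreeIter : Antitone (derivTreeIter T) := by
  intro α β hαβ
  induction β using WellFoundedLT.induction with
  | _ β IH =>
    rcases hαβ.eq_or_lt with rfl | hlt
    · exact subset_rfl
    rcases Ordinal.zero_or_succ_or_isSuccLimit β with rfl | ⟨b, rfl⟩ | hlim
    · exact absurd hlt (zero_le (a := α)).not_gt
    · rw [derivTreeIter_succ]
      exact (Set.sep_subset _ _).trans (IH b (Order.lt_succ b) (Order.lt_succ_iff.mp hlt))
    · rw [derivTreeIter_of_isSuccLimit T hlim]
      exact Set.biInter_subset_of_mem hlt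

lemma derivTreeIter_subset (o : Ordinal) : derivTreeIter T o ⊆ T := by
  simpa only [derivTreeIter_zero] using antitone_derivTreeIter T (zero_le (a := o))

lemma derivTreeIter_nonempty_of_lt_treeOrder {o : Ordinal} (h : o < treeOrder T) :
    (derivTreeIter T o).Nonempty :=
  Set.nonempty_iff_ne_empty.mpr fun he =>
    (csInf_le' (show o ∈ {o' | derivTreeIter T o' = ∅} from he)).not_gt h

lemma exists_prefix_of_mem_derivTreeIter_add (γ : Ordinal) (k : ℕ) {l : List X}
    (hl : l ∈ derivTreeIter T (γ + k)) :
    ∃ l' ∈ derivTreeIter T γ, l <+: l' ∧ l.length + k ≤ l'.length := by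
  induction k generalizing l with
  | zero => exact ⟨l, by simpa using hl, List.prefix_refl l, le_rfl⟩
  | succ k IH =>
    rw [Nat.cast_succ, ← add_assoc, ← Order.succ_eq_add_one, derivTreeIter_succ] at hl
    obtain ⟨-, l₂, hl₂, hpre, hne⟩ := hl
    obtain ⟨l', hl', hpre', hlen⟩ := IH hl₂
    have : l.length < l₂.length :=
      hpre.length_le.lt_of_ne fun h => hne (hpre.eq_of_length h)
    exact ⟨l', hl', hpre.trans hpre', by omega⟩

end Trees

/-- The Schreier family `S₁ = {E : |E| ≤ min E}`. -/
def IsAdmissible (E : Finset ℕ) : Prop := ∀ n ∈ E, E.card ≤ n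

lemma IsAdmissible.one_le {E : Finset ℕ} (hE : IsAdmissible E) {j : ℕ} (hj : j ∈ E) : 1 ≤ j :=
  (card_pos.mpr ⟨j, hj⟩).trans_le (hE j hj)

lemma abs_sum_le_schNorm (a : ℕ →₀ ℝ) {E : Finset ℕ} (hE : IsAdmissible E) :
    |∑ i ∈ E, a i| ≤ schNorm a := by
  have hsum : ∑ i ∈ E, a i = ∑ i ∈ E ∩ a.support, a i :=
    (sum_subset inter_subset_left fun i hi hi' => by simp_all).symm
  rw [hsum]
  refine le_sup' (fun E => |∑ i ∈ E, a i|)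
    (mem_filter.mpr ⟨mem_powerset.mpr inter_subset_right, fun n hn => ?_⟩)
  exact (card_le_card inter_subset_left).trans (hE n (mem_inter.mp hn).1)

lemma schNorm_le_of_forall {a : ℕ →₀ ℝ} {C : ℝ}
    (h : ∀ E, IsAdmissible E → |∑ i ∈ E, a i| ≤ C) : schNorm a ≤ C :=
  sup'_le _ _ fun E hE => h E (mem_filter.mp hE).2

lemma abs_apply_le_schNorm (a : ℕ →₀ ℝ) {j : ℕ} (hj : 1 ≤ j) : |a j| ≤ schNorm a := by
  simpa using abs_sum_le_schNorm a (E := {j}) (by simpa [IsAdmissible] using hj)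

@[simp]
lemma schNorm_neg (a : ℕ →₀ ℝ) : schNorm (-a) = schNorm a := by
  simp [schNorm]

lemma schNorm_sum_smul_le {ι : Type*} (s : Finset ι) (c : ι → ℝ) (x : ι → ℕ →₀ ℝ) :
    schNorm (∑ i ∈ s, c i • x i) ≤ ∑ i ∈ s, |c i| * schNorm (x i) := by
  refine schNorm_le_of_forall fun E hE => ?_
  calc |∑ j ∈ E, (∑ i ∈ s, c i • x i) j| = |∑ i ∈ s, c i * ∑ j ∈ E, x i j| := by
        simp only [Finsupp.finsetSum_apply, Finsupp.smul_apply, smul_eq_mul, mul_sum]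
        rw [sum_comm]
    _ ≤ ∑ i ∈ s, |c i * ∑ j ∈ E, x i j| := abs_sum_le_sum_abs _ _
    _ ≤ ∑ i ∈ s, |c i| * schNorm (x i) := by
        gcongr with i
        rw [abs_mul]
        exact mul_le_mul_of_nonneg_left (abs_sum_le_schNorm _ hE) (abs_nonneg _)

/-- At least `⌈|S|/2⌉` elements of `S` are `≥ ⌈|S|/2⌉`. -/
lemma exists_isAdmissible_subset {S : Finset ℕ} (h0 : 0 ∉ S) :
    ∃ E ⊆ S, IsAdmissible E ∧ S.card ≤ 2 * E.card := by
  set k := (S.card + 1) / 2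
  have hsmall : (S.filter (· < k)).card ≤ k - 1 := by
    refine (card_le_card fun x hx => ?_).trans (Nat.card_Ico 1 k).le
    obtain ⟨hxS, hxk⟩ := mem_filter.mp hx
    have : x ≠ 0 := fun h => h0 (h ▸ hxS)
    exact mem_Ico.mpr ⟨by omega, hxk⟩
  have hlarge : k ≤ (S.filter (k ≤ ·)).card := by
    have := card_filter_add_card_filter_not (s := S) (k ≤ ·)
    simp only [not_le] at this
    omega
  obtain ⟨E, hES, hEcard⟩ := exists_subset_card_eq hlarge
  refine ⟨E, hES.trans (filter_subset _ _), fun n hn => ?_, by omega⟩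
  exact hEcard ▸ (mem_filter.mp (hES hn)).2

lemma mul_card_le_two_of_le_apply {S : Finset ℕ} (h0 : 0 ∉ S) {z : ℕ →₀ ℝ}
    (hz : schNorm z ≤ 1) {θ : ℝ} (hθ : 0 ≤ θ) (hS : ∀ j ∈ S, θ ≤ z j) : θ * S.card ≤ 2 := by
  obtain ⟨E, hES, hE, hcard⟩ := exists_isAdmissible_subset h0
  have hsum : θ * E.card ≤ 1 :=
    calc θ * E.card = ∑ _j ∈ E, θ := by rw [sum_const, nsmul_eq_mul, mul_comm]
      _ ≤ ∑ j ∈ E, z j := sum_le_sum fun j hj => hS j (hES hj)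
      _ ≤ 1 := (le_abs_self _).trans ((abs_sum_le_schNorm z hE).trans hz)
  have : (S.card : ℝ) ≤ 2 * E.card := by exact_mod_cast hcard
  nlinarith

noncomputable def heavySet (θ : ℝ) (z : ℕ →₀ ℝ) : Finset ℕ :=
  z.support.filter fun j => 1 ≤ j ∧ θ < |z j|

lemma mem_heavySet {θ : ℝ} {z : ℕ →₀ ℝ} {j : ℕ} (hθ : 0 ≤ θ) :
    j ∈ heavySet θ z ↔ 1 ≤ j ∧ θ < |z j| := by
  simp only [heavySet, mem_filter, Finsupp.mem_support_iff, and_iff_right_iff_imp]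
  intro h h0
  simp only [h0, abs_zero] at h
  linarith [h.2]

lemma mul_card_heavySet_le {θ : ℝ} (hθ : 0 ≤ θ) {z : ℕ →₀ ℝ} (hz : schNorm z ≤ 1) :
    θ * (heavySet θ z).card ≤ 4 := by
  set H := heavySet θ z
  have h0 : ∀ S ⊆ H, 0 ∉ S := fun S hS h => by
    have := ((mem_heavySet hθ).mp (hS h)).1
    omega
  have hpos := mul_card_le_two_of_le_apply (h0 _ (filter_subset (θ < z ·) H)) hz hθ
    fun j hj => (mem_filter.mp hj).2.le
  have hneg := mul_card_le_two_of_le_apply (h0 _ (filter_subset (¬θ < z ·) H)) (z := -z)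
    (by simpa using hz) hθ
    fun j hj => by
      obtain ⟨hjH, hj⟩ := mem_filter.mp hj
      have := ((mem_heavySet hθ).mp hjH).2
      rw [lt_abs] at this
      simp only [Finsupp.coe_neg, Pi.neg_apply]
      exact (this.resolve_left hj).le
  have hsplit : (H.card : ℝ) = (H.filter (θ < z ·)).card + (H.filter (¬θ < z ·)).card := by
    exact_mod_cast (card_filter_add_card_filter_not (s := H) (θ < z ·)).symm
  rw [hsplit]
  linarith

section Combinatorics

variable {ι α : Type*} [DecidableEq ι] [DecidableEq α]

/-- Greedy choice: each chosen set meets at most `h * B` others. -/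
lemma exists_pairwiseDisjoint_of_card_filter_mem_le (f : ι → Finset α) {h B : ℕ} (P : ℕ)
    {F : Finset ι} (hB : ∀ x, (F.filter (x ∈ f ·)).card ≤ B) (hf : ∀ i ∈ F, (f i).card ≤ h)
    (hF : P * (h * B + 1) ≤ F.card) :
    ∃ G ⊆ F, G.card = P ∧ (G : Set ι).PairwiseDisjoint f := by
  induction P generalizing F with
  | zero => exact ⟨∅, empty_subset _, rfl, by simp⟩
  | succ P IH =>
    obtain ⟨i₀, hi₀⟩ : F.Nonempty :=
      card_pos.mp ((Nat.mul_pos P.succ_pos (h * B).succ_pos).trans_le hF)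
    set Bad := F.filter fun j => ¬Disjoint (f i₀) (f j)
    have hBad : Bad.card ≤ h * B :=
      calc Bad.card ≤ ((f i₀).biUnion fun x => F.filter (x ∈ f ·)).card := by
            refine card_le_card fun j hj => ?_
            obtain ⟨hjF, hj⟩ := mem_filter.mp hj
            obtain ⟨x, hx₀, hxj⟩ := not_disjoint_iff.mp hj
            exact mem_biUnion.mpr ⟨x, hx₀, mem_filter.mpr ⟨hjF, hxj⟩⟩
        _ ≤ ∑ x ∈ f i₀, (F.filter (x ∈ f ·)).card := card_biUnion_le
        _ ≤ (f i₀).card * B := by simpa using sum_le_sum fun x _ => hB x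
        _ ≤ h * B := Nat.mul_le_mul_right _ (hf i₀ hi₀)
    have hcard : P * (h * B + 1) ≤ (F \ insert i₀ Bad).card := by
      have := le_card_sdiff (insert i₀ Bad) F
      have := card_insert_le i₀ Bad
      rw [Nat.succ_mul] at hF
      omega
    obtain ⟨G, hGF, hGcard, hG⟩ := IH
      (fun x => (card_le_card (filter_subset_filter _ sdiff_subset)).trans (hB x))
      (fun i hi => hf i (sdiff_subset hi)) hcard
    have hi₀G : i₀ ∉ G := fun h => (mem_sdiff.mp (hGF h)).2 (mem_insert_self _ _)
    refine ⟨insert i₀ G, insert_subset hi₀ (hGF.trans sdiff_subset), by simp [hi₀G, hGcard], ?_⟩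
    rw [coe_insert]
    refine hG.insert fun j hj _ => ?_
    obtain ⟨hjF, hj⟩ := mem_sdiff.mp (hGF hj)
    by_contra hdisj
    exact hj (mem_insert_of_mem (mem_filter.mpr ⟨hjF, hdisj⟩))

/-- The size of a family of `h`-sets guaranteed to contain a weak `P`-sunflower. -/
def sunflowerBound : ℕ → ℕ → ℕ
  | 0, P => P
  | h + 1, P => P * ((h + 1) * sunflowerBound h P + 1)

/-- Weak sunflower lemma. Either some point lies in many of the sets (remove it and recurse on `h`),
or the greedy choice gives pairwise disjoint sets. -/
lemma exists_pairwise_inter_subset (f : ι → Finset α) (h P : ℕ) {F : Finset ι}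
    (hf : ∀ i ∈ F, (f i).card ≤ h) (hF : sunflowerBound h P ≤ F.card) :
    ∃ G ⊆ F, G.card = P ∧ ∃ Y : Finset α, Y.card ≤ h ∧
      (G : Set ι).Pairwise fun i j => f i ∩ f j ⊆ Y := by
  induction h generalizing f F with
  | zero =>
    obtain ⟨G, hGF, hGcard⟩ := exists_subset_card_eq (show P ≤ F.card from hF)
    refine ⟨G, hGF, hGcard, ∅, le_rfl, fun i hi _ _ _ => ?_⟩
    simp [card_eq_zero.mp (Nat.le_zero.mp (hf i (hGF hi)))]
  | succ h IH =>
    by_cases hx : ∃ x, sunflowerBound h P ≤ (F.filter (x ∈ f ·)).card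
    · obtain ⟨x, hx⟩ := hx
      obtain ⟨G, hGF, hGcard, Y, hYcard, hY⟩ := IH (fun i => (f i).erase x)
        (fun i hi => by
          obtain ⟨hiF, hxi⟩ := mem_filter.mp hi
          rw [card_erase_of_mem hxi]
          have := hf i hiF
          omega) hx
      refine ⟨G, hGF.trans (filter_subset _ _), hGcard, insert x Y,
        (card_insert_le _ _).trans (by omega), fun i hi j hj hij y hy => ?_⟩
      rw [mem_insert]
      by_cases hyx : y = x
      · exact .inl hyx
      · exact .inr (hY hi hj hij (by simp_all))
    · simp only [not_exists, not_le] at hx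
      obtain ⟨G, hGF, hGcard, hG⟩ := exists_pairwiseDisjoint_of_card_filter_mem_le f P
        (fun x => (hx x).le) hf hF
      exact ⟨G, hGF, hGcard, ∅, by simp, fun i hi j hj hij =>
        (disjoint_iff_inter_eq_empty.mp (hG hi hj hij)).le⟩

end Combinatorics

section Pigeonhole

variable {ι α : Type*} [DecidableEq α]

lemma floor_div_mem_Icc {γ x : ℝ} (hγ : 0 < γ) (hx : |x| ≤ 1) :
    ⌊x / γ⌋ ∈ Icc ⌊-1 / γ⌋ ⌊1 / γ⌋ := by
  rw [abs_le] at hx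
  exact mem_Icc.mpr ⟨Int.floor_mono (by gcongr; exact hx.1), Int.floor_mono (by gcongr; exact hx.2)⟩

lemma abs_sub_lt_of_floor_div_eq {γ x y : ℝ} (hγ : 0 < γ) (h : ⌊x / γ⌋ = ⌊y / γ⌋) :
    |x - y| < γ := by
  have := Int.abs_sub_lt_one_of_floor_eq_floor h
  rwa [← sub_div, abs_div, abs_of_pos hγ, div_lt_one hγ] at this

/-- Pigeonhole on the grid of mesh `γ`, one coordinate of `Y` at a time. -/
lemma exists_subset_abs_sub_le {γ : ℝ} (hγ : 0 < γ) (v : ι → α → ℝ) (P : ℕ) (Y : Finset α)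
    {F : Finset ι} (hv : ∀ i ∈ F, ∀ y ∈ Y, |v i y| ≤ 1)
    (hF : P * (Icc ⌊-1 / γ⌋ ⌊1 / γ⌋).card ^ Y.card ≤ F.card) :
    ∃ G ⊆ F, P ≤ G.card ∧ ∀ i ∈ G, ∀ j ∈ G, ∀ y ∈ Y, |v i y - v j y| ≤ γ := by
  induction Y using Finset.induction_on generalizing F with
  | empty => exact ⟨F, subset_rfl, by simpa using hF, by simp⟩
  | @insert y Y hyY IH =>
    set cells := Icc ⌊-1 / γ⌋ ⌊1 / γ⌋
    have hcells : cells.Nonempty :=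
      nonempty_Icc.mpr (Int.floor_mono (div_le_div_of_nonneg_right (by norm_num) hγ.le))
    obtain ⟨m, -, hm⟩ := exists_le_card_fiber_of_mul_le_card_of_maps_to
      (f := fun i => ⌊v i y / γ⌋) (n := P * cells.card ^ Y.card)
      (fun i hi => floor_div_mem_Icc hγ (hv i hi y (mem_insert_self y Y))) hcells
      (by rw [card_insert_of_notMem hyY, pow_succ] at hF; linarith)
    obtain ⟨G, hGF, hGcard, hG⟩ := IH (fun i hi z hz => hv i (filter_subset _ _ hi) z
      (mem_insert_of_mem hz)) hm
    refine ⟨G, hGF.trans (filter_subset _ _), hGcard, fun i hi j hj z hz => ?_⟩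
    rcases mem_insert.mp hz with rfl | hz
    · refine (abs_sub_lt_of_floor_div_eq hγ ?_).le
      rw [(mem_filter.mp (hGF hi)).2, (mem_filter.mp (hGF hj)).2]
    · exact hG i hi j hj z hz

end Pigeonhole

section SignedAverage

variable {ι : Type*}

lemma abs_sum_mul_le_of_sum_eq_zero (G : Finset ι) {s w : ι → ℝ} {γ : ℝ}
    (hs : ∑ i ∈ G, s i = 0) (hs1 : ∀ i ∈ G, |s i| ≤ 1)
    (hw : ∀ i ∈ G, ∀ i' ∈ G, |w i - w i'| ≤ γ) :
    |∑ i ∈ G, s i * w i| ≤ G.card * γ := by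
  rcases G.eq_empty_or_nonempty with rfl | ⟨i₀, hi₀⟩
  · simp
  have hshift : ∑ i ∈ G, s i * w i = ∑ i ∈ G, s i * (w i - w i₀) := by
    simp only [mul_sub, sum_sub_distrib, ← sum_mul, hs, zero_mul, sub_zero]
  calc |∑ i ∈ G, s i * w i| ≤ ∑ i ∈ G, |s i * (w i - w i₀)| :=
        hshift ▸ abs_sum_le_sum_abs _ _
    _ ≤ ∑ _i ∈ G, γ := by
        gcongr with i hi
        rw [abs_mul]
        exact (mul_le_of_le_one_left (abs_nonneg _) (hs1 i hi)).trans (hw i hi i₀ hi₀)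
    _ = G.card * γ := by rw [sum_const, nsmul_eq_mul]

lemma sum_abs_le_of_subsingleton_large (G : Finset ι) {w : ι → ℝ} {θ : ℝ} (hθ : 0 ≤ θ)
    (hw : ∀ i ∈ G, |w i| ≤ 1)
    (hlarge : ∀ i ∈ G, ∀ i' ∈ G, θ < |w i| → θ < |w i'| → i = i') :
    ∑ i ∈ G, |w i| ≤ 1 + G.card * θ := by
  rw [← sum_filter_add_sum_filter_not G (θ < |w ·|)]
  have hone : (G.filter (θ < |w ·|)).card ≤ 1 := card_le_one.mpr fun i hi i' hi' => by
    rw [mem_filter] at hi hi'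
    exact hlarge i hi.1 i' hi'.1 hi.2 hi'.2
  gcongr
  · calc ∑ i ∈ G.filter (θ < |w ·|), |w i| ≤ ∑ _i ∈ G.filter (θ < |w ·|), (1 : ℝ) :=
          sum_le_sum fun i hi => hw i (mem_filter.mp hi).1
      _ ≤ 1 := by simpa using hone
  · calc ∑ i ∈ G.filter (¬θ < |w ·|), |w i| ≤ ∑ _i ∈ G.filter (¬θ < |w ·|), θ :=
          sum_le_sum fun i hi => not_lt.mp (mem_filter.mp hi).2
      _ ≤ G.card * θ := by
          rw [sum_const, nsmul_eq_mul]
          exact mul_le_mul_of_nonneg_right (by exact_mod_cast card_filter_le _ _) hθ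

/-- The witness is the signed average `(𝟙_A - 𝟙_{G \ A}) / 2k` with `|A| = k`; its signs cancel
where the vectors are close. -/
lemma exists_sum_smul_abs_apply_le_of_close_or_sparse [DecidableEq ι] {F G : Finset ι}
    (hGF : G ⊆ F) {k : ℕ} (hk : 0 < k) (hG : G.card = 2 * k) (z : ι → ℕ →₀ ℝ)
    (hz : ∀ i ∈ G, schNorm (z i) ≤ 1) {θ γ : ℝ} (hθ : 0 ≤ θ)
    (hcoord : ∀ j, 1 ≤ j → (∀ i ∈ G, ∀ i' ∈ G, |z i j - z i' j| ≤ γ) ∨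
      ∀ i ∈ G, ∀ i' ∈ G, θ < |z i j| → θ < |z i' j| → i = i') :
    ∃ c : ι → ℝ, ∑ i ∈ F, |c i| = 1 ∧
      ∀ j, 1 ≤ j → |(∑ i ∈ F, c i • z i) j| ≤ max γ (1 / (2 * k) + θ) := by
  obtain ⟨A, hAG, hAcard⟩ := exists_subset_card_eq (show k ≤ G.card by omega)
  set s : ι → ℝ := fun i => if i ∈ A then 1 else -1
  have hs1 : ∀ i, |s i| = 1 := fun i => by by_cases hi : i ∈ A <;> simp [s, hi]
  have hs : ∑ i ∈ G, s i = 0 := by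
    have hGA : (G \ A).card = k := by rw [card_sdiff_of_subset hAG]; omega
    rw [← sum_sdiff hAG, sum_congr rfl fun i hi => if_neg (mem_sdiff.mp hi).2,
      sum_congr rfl fun i hi => if_pos hi]
    simp [hGA, hAcard]
  have hkR : (0 : ℝ) < 2 * k := by positivity
  have hcoeff : ∀ j, (∑ i ∈ F, (if i ∈ G then s i / (2 * k) else 0) • z i) j =
      (2 * k : ℝ)⁻¹ * ∑ i ∈ G, s i * z i j := by
    intro j
    simp only [Finsupp.finsetSum_apply, Finsupp.smul_apply, smul_eq_mul, ite_mul, zero_mul,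
      sum_ite_mem, inter_eq_right.mpr hGF, mul_sum]
    exact sum_congr rfl fun i _ => by ring
  refine ⟨fun i => if i ∈ G then s i / (2 * k) else 0, ?_, fun j hj => ?_⟩
  · simp only [apply_ite abs, abs_zero, sum_ite_mem, inter_eq_right.mpr hGF, abs_div, hs1,
      abs_of_pos hkR, sum_const, hG, nsmul_eq_mul]
    push_cast
    field_simp
  rw [hcoeff, abs_mul, abs_inv, abs_of_pos hkR, inv_mul_le_iff₀ hkR]
  rcases hcoord j hj with hclose | hsparse
  · calc |∑ i ∈ G, s i * z i j| ≤ G.card * γ :=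
          abs_sum_mul_le_of_sum_eq_zero G hs (fun i _ => (hs1 i).le) hclose
      _ ≤ 2 * k * max γ (1 / (2 * k) + θ) := by
          rw [hG]; push_cast; gcongr; exact le_max_left _ _
  · calc |∑ i ∈ G, s i * z i j| ≤ ∑ i ∈ G, |z i j| := by
          refine (abs_sum_le_sum_abs _ _).trans (sum_le_sum fun i _ => ?_)
          rw [abs_mul, hs1, one_mul]
      _ ≤ 1 + G.card * θ := sum_abs_le_of_subsingleton_large G hθ
          (fun i hi => (abs_apply_le_schNorm _ hj).trans (hz i hi)) hsparse
      _ = 2 * k * (1 / (2 * k) + θ) := by rw [hG]; push_cast; field_simp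
      _ ≤ 2 * k * max γ (1 / (2 * k) + θ) := by gcongr; exact le_max_right _ _

end SignedAverage

/-- Each vector has at most `16 / η` coordinates above `η / 4`; a weak sunflower confines their
pairwise overlaps to a bounded set `Y`, pigeonhole makes `2k` of the vectors `η`-close on `Y`, and
their signed average does the job. -/
theorem exists_sum_smul_abs_apply_le {η : ℝ} (hη : 0 < η) :
    ∃ N : ℕ, ∀ {ι : Type u} (F : Finset ι) (z : ι → ℕ →₀ ℝ), N ≤ F.card →
      (∀ i ∈ F, schNorm (z i) ≤ 1) →
      ∃ c : ι → ℝ, ∑ i ∈ F, |c i| = 1 ∧ ∀ j, 1 ≤ j → |(∑ i ∈ F, c i • z i) j| ≤ η := by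
  classical
  set θ := η / 4
  set h := ⌊4 / θ⌋₊
  obtain ⟨k, hk⟩ := exists_nat_gt (2 / η)
  have hk0 : 0 < k := by exact_mod_cast (div_pos two_pos hη).trans hk
  set C := (Icc ⌊-1 / η⌋ ⌊1 / η⌋).card
  have hC : 1 ≤ C := card_pos.mpr <|
    nonempty_Icc.mpr (Int.floor_mono (div_le_div_of_nonneg_right (by norm_num) hη.le))
  refine ⟨sunflowerBound h (2 * k * C ^ h), fun F z hF hz => ?_⟩
  have hheavy : ∀ i ∈ F, (heavySet θ (z i)).card ≤ h := fun i hi =>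
    Nat.le_floor <| (le_div_iff₀' (by positivity)).mpr <|
      mul_card_heavySet_le (by positivity) (hz i hi)
  obtain ⟨G₁, hG₁F, hG₁card, Y, hYcard, hY⟩ :=
    exists_pairwise_inter_subset (fun i => heavySet θ (z i)) h _ hheavy hF
  obtain ⟨G₂, hG₂G₁, hG₂card, hclose⟩ := exists_subset_abs_sub_le hη (fun i j => z i j) (2 * k)
    (Y.filter (1 ≤ ·)) (fun i hi j hj => (abs_apply_le_schNorm _ (mem_filter.mp hj).2).trans
      (hz i (hG₁F hi)))
    (hG₁card ▸ Nat.mul_le_mul_left _ (Nat.pow_le_pow_right hC ((card_filter_le _ _).trans hYcard)))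
  obtain ⟨G, hGG₂, hGcard⟩ := exists_subset_card_eq hG₂card
  have hGF : G ⊆ F := hGG₂.trans (hG₂G₁.trans hG₁F)
  obtain ⟨c, hc, hcz⟩ := exists_sum_smul_abs_apply_le_of_close_or_sparse hGF hk0 hGcard z
    (fun i hi => hz i (hGF hi)) (θ := θ) (γ := η) (by positivity) fun j hj => by
      by_cases hjY : j ∈ Y
      · exact .inl fun i hi i' hi' => hclose i (hGG₂ hi) i' (hGG₂ hi') j (mem_filter.mpr ⟨hjY, hj⟩)
      · refine .inr fun i hi i' hi' hji hji' => by_contra fun hii' => hjY ?_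
        exact hY (hG₂G₁ (hGG₂ hi)) (hG₂G₁ (hGG₂ hi')) hii'
          (mem_inter.mpr ⟨(mem_heavySet (by positivity)).mpr ⟨hj, hji⟩,
            (mem_heavySet (by positivity)).mpr ⟨hj, hji'⟩⟩)
  refine ⟨c, hc, fun j hj => (hcz j hj).trans (max_le le_rfl ?_)⟩
  have : 1 / (2 * k : ℝ) ≤ η / 4 := by
    rw [div_le_iff₀ (by positivity)]
    rw [div_lt_iff₀ hη] at hk
    nlinarith
  linarith [show θ = η / 4 from rfl]

section Combinations

variable {E : Type*} [AddCommGroup E] [Module ℝ E]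

def IsAbsCombFrom (l : List E) (lo : ℕ) (w : ℝ) (v : E) : Prop :=
  ∃ c : ℕ → ℝ, ∑ i ∈ Ico lo l.length, |c i| = w ∧ v = ∑ i ∈ Ico lo l.length, c i • l.getD i 0

lemma isAbsCombFrom_length (l : List E) : IsAbsCombFrom l l.length 0 0 :=
  ⟨0, by simp, by simp⟩

lemma IsAbsCombFrom.smul {l : List E} {lo : ℕ} {w : ℝ} {v : E} (h : IsAbsCombFrom l lo w v)
    (r : ℝ) : IsAbsCombFrom l lo (|r| * w) (r • v) := by
  obtain ⟨c, hw, rfl⟩ := h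
  exact ⟨fun i => r * c i, by simp [abs_mul, ← mul_sum, hw], by simp [smul_sum, mul_smul]⟩

lemma IsAbsCombFrom.add_of_prefix {l l' : List E} {lo : ℕ} {w w' : ℝ} {v v' : E}
    (h : IsAbsCombFrom l lo w v) (hlo : lo ≤ l.length) (hpre : l <+: l')
    (h' : IsAbsCombFrom l' l.length w' v') : IsAbsCombFrom l' lo (w + w') (v + v') := by
  obtain ⟨c, rfl, rfl⟩ := h
  obtain ⟨c', rfl, rfl⟩ := h'
  obtain ⟨r, rfl⟩ := hpre
  have hlen : l.length ≤ (l ++ r).length := by simp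
  refine ⟨fun i => if i < l.length then c i else c' i, ?_, ?_⟩ <;>
  · rw [← sum_Ico_consecutive _ hlo hlen]
    congr 1 <;> refine sum_congr rfl fun i hi => ?_ <;> have := mem_Ico.mp hi
    · simp [this.2, List.getElem?_append_left this.2]
    · simp [this.1.not_gt]

lemma IsAbsCombFrom.exists_fin {l : List E} {lo : ℕ} {w : ℝ} {v : E}
    (h : IsAbsCombFrom l lo w v) :
    ∃ a : Fin l.length → ℝ, ∑ i, |a i| = w ∧ ∑ i, a i • l.get i = v := by
  obtain ⟨c, rfl, rfl⟩ := h
  have hfilter : (range l.length).filter (lo ≤ ·) = Ico lo l.length := by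
    ext
    simp [and_comm]
  refine ⟨fun i => if lo ≤ (i : ℕ) then c i else 0, ?_, ?_⟩
  · rw [Fin.sum_univ_eq_sum_range (fun i => |if lo ≤ i then c i else 0|)]
    simp [apply_ite abs, ← sum_filter, hfilter]
  · simp only [List.get_eq_getElem, ← List.getD_eq_getElem l 0]
    rw [Fin.sum_univ_eq_sum_range (fun i => (if lo ≤ i then c i else 0) • l.getD i 0)]
    simp only [ite_smul, zero_smul, ← sum_filter, hfilter]

end Combinations

def AdmissibleSumBound (R : ℕ) (b : ℝ) (v : ℕ →₀ ℝ) : Prop :=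
  ∀ E, IsAdmissible E → (E.card ≤ R → |∑ j ∈ E, v j| ≤ b) ∧ |∑ j ∈ E, v j| ≤ 1 + b

lemma admissibleSumBound_zero (R : ℕ) : AdmissibleSumBound R 0 0 := fun E _ => by simp

/-- Adding a layer `g` whose coordinates are `η`-small and whose support ends at `R₁`: an
admissible set of size `≤ R` sees `g` only by `R η ≤ δ`, one reaching below `R₁` has size `≤ R₁`,
and one beyond `R₁` does not see `g` at all. -/
lemma AdmissibleSumBound.add {R R₁ : ℕ} {b δ η : ℝ} {g v : ℕ →₀ ℝ}
    (hv : AdmissibleSumBound R₁ b v) (hg : schNorm g ≤ 1) (hη : 0 ≤ η)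
    (hsmall : ∀ j, 1 ≤ j → |g j| ≤ η) (hRη : R * η ≤ δ) (hR : R ≤ R₁)
    (hsupp : ∀ j, R₁ < j → g j = 0) : AdmissibleSumBound R (b + δ) (g + v) := by
  intro E hE
  have hδ : 0 ≤ δ := (mul_nonneg R.cast_nonneg hη).trans hRη
  have hsum : ∑ j ∈ E, (g + v) j = ∑ j ∈ E, g j + ∑ j ∈ E, v j := by
    simp [sum_add_distrib]
  rw [hsum]
  refine ⟨fun hcard => ?_, ?_⟩
  · have hg : |∑ j ∈ E, g j| ≤ δ :=
      calc |∑ j ∈ E, g j| ≤ ∑ _j ∈ E, η :=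
            (abs_sum_le_sum_abs _ _).trans (sum_le_sum fun j hj => hsmall j (hE.one_le hj))
        _ = E.card * η := by rw [sum_const, nsmul_eq_mul]
        _ ≤ δ := (mul_le_mul_of_nonneg_right (by exact_mod_cast hcard) hη).trans hRη
    linarith [abs_add_le (∑ j ∈ E, g j) (∑ j ∈ E, v j), (hv E hE).1 (hcard.trans hR)]
  · by_cases hlow : ∃ j ∈ E, j ≤ R₁
    · obtain ⟨j, hj, hjR⟩ := hlow
      linarith [abs_add_le (∑ j ∈ E, g j) (∑ j ∈ E, v j), (abs_sum_le_schNorm g hE).trans hg,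
        (hv E hE).1 ((hE j hj).trans hjR)]
    · simp only [not_exists, not_and, not_le] at hlow
      rw [sum_eq_zero fun j hj => hsupp j (hlow j hj), zero_add]
      linarith [(hv E hE).2]

section Construction

variable {T : Set (List (ℕ →₀ ℝ))}

/-- Each layer comes from `exists_sum_smul_abs_apply_le` on a fresh stretch of the branch, with
its coordinate bound chosen against the supports of the earlier layers. -/
lemma exists_isAbsCombFrom_admissibleSumBound (hT : ∀ l ∈ T, ∀ x ∈ l, schNorm x ≤ 1) {δ : ℝ}
    (hδ : 0 < δ) (t : ℕ) {l : List (ℕ →₀ ℝ)} (hl : l ∈ derivTreeIter T (ω * t)) (R : ℕ) :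
    ∃ l' ∈ T, l <+: l' ∧ ∃ v, IsAbsCombFrom l' l.length t v ∧ AdmissibleSumBound R (t * δ) v := by
  induction t generalizing l R with
  | zero =>
    have hlT : l ∈ T := by simpa [derivTreeIter_zero] using hl
    exact ⟨l, hlT, List.prefix_refl l, 0, by simpa using isAbsCombFrom_length l,
      by simpa using admissibleSumBound_zero R⟩
  | succ t IH =>
    have hη : 0 < δ / (R + 1) := by positivity
    obtain ⟨N, hN⟩ := exists_sum_smul_abs_apply_le hη
    have hle : ω * t + N ≤ ω * ↑(t + 1) := by
      rw [Nat.cast_succ, mul_add_one]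
      gcongr
      exact (Ordinal.natCast_lt_omega0 N).le
    obtain ⟨l₁, hl₁, hpre₁, hlen₁⟩ :=
      exists_prefix_of_mem_derivTreeIter_add T _ N (antitone_derivTreeIter T hle hl)
    have hball : ∀ i ∈ Ico l.length l₁.length, schNorm (l₁.getD i 0) ≤ 1 := fun i hi => by
      refine hT l₁ (derivTreeIter_subset T _ hl₁) _ ?_
      rw [List.getD_eq_getElem _ _ (mem_Ico.mp hi).2]
      exact List.getElem_mem _
    obtain ⟨c, hc, hcz⟩ := hN (Ico l.length l₁.length) (fun i => l₁.getD i 0)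
      (by simp only [Nat.card_Ico]; omega) hball
    set g := ∑ i ∈ Ico l.length l₁.length, c i • l₁.getD i 0
    have hg : schNorm g ≤ 1 := (schNorm_sum_smul_le _ _ _).trans <|
      hc ▸ sum_le_sum fun i hi => mul_le_of_le_one_right (abs_nonneg _) (hball i hi)
    obtain ⟨l', hl'T, hpre₂, v, hv, hvb⟩ := IH hl₁ (max R (g.support.sup id))
    refine ⟨l', hl'T, hpre₁.trans hpre₂, g + v, ?_, ?_⟩
    · have := IsAbsCombFrom.add_of_prefix ⟨c, hc, rfl⟩ hpre₁.length_le hpre₂ hv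
      rwa [Nat.cast_succ, add_comm (t : ℝ)]
    · have hRη : (R : ℝ) * (δ / (R + 1)) ≤ δ := by
        rw [mul_div_assoc', div_le_iff₀ (by positivity)]
        nlinarith
      have := hvb.add (δ := δ) hg hη.le hcz hRη (le_max_left _ _) fun j hj => by
        by_contra hgj
        have : j ≤ g.support.sup id := le_sup (f := id) (Finsupp.mem_support_iff.mpr hgj)
        omega
      rwa [Nat.cast_succ, add_one_mul]

theorem exists_absComb_schNorm_lt (hT : ∀ l ∈ T, ∀ x ∈ l, schNorm x ≤ 1)
    (hne : ∀ n : ℕ, (derivTreeIter T (ω * n)).Nonempty) {ε : ℝ} (hε : 0 < ε) :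
    ∃ l ∈ T, ∃ a : Fin l.length → ℝ, ∑ i, |a i| = 1 ∧ schNorm (∑ i, a i • l.get i) < ε := by
  obtain ⟨n, hn⟩ := exists_nat_gt (2 / ε)
  have hn0 : (0 : ℝ) < n := (div_pos two_pos hε).trans hn
  obtain ⟨l₀, hl₀⟩ := hne n
  obtain ⟨l, hlT, -, v, hv, hvb⟩ :=
    exists_isAbsCombFrom_admissibleSumBound hT (inv_pos.mpr hn0) n hl₀ 0
  obtain ⟨a, ha, hav⟩ := (hv.smul (n : ℝ)⁻¹).exists_fin
  refine ⟨l, hlT, a, by rw [ha, abs_inv, abs_of_pos hn0, inv_mul_cancel₀ hn0.ne'], ?_⟩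
  rw [hav]
  calc schNorm ((n : ℝ)⁻¹ • v) ≤ 2 / n := schNorm_le_of_forall fun E hE => by
        have := (hvb E hE).2
        rw [mul_inv_cancel₀ hn0.ne'] at this
        simp only [Finsupp.smul_apply, smul_eq_mul, ← mul_sum, abs_mul, abs_inv,
          abs_of_pos hn0]
        rw [inv_mul_le_iff₀ hn0]
        linarith [div_mul_cancel₀ (2 : ℝ) hn0.ne']
    _ < ε := by rwa [div_lt_iff₀ hn0, mul_comm, ← div_lt_iff₀ hε]

end Construction

lemma omega0_mul_natCast_lt (n : ℕ) : ω * n < ω * ω :=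
  mul_lt_mul_of_pos_left (Ordinal.natCast_lt_omega0 n) Ordinal.omega0_pos

/-- On the Schreier space `X₁`: any tree of order `ω²` on `B_{X₁} \ {0}` has a
node admitting an absolutely convex combination of arbitrarily small norm;
consequently every `ℓ₁-K`-tree on `X₁` has order `< ω²`, i.e. `I(X₁) ≤ ω²`. -/
theorem no_l1_tree_of_order_omega_sq_on_schreier :
    (∀ T : Set (List (ℕ →₀ ℝ)),
      (∀ l ∈ T, ∀ x ∈ l, schNorm x ≤ 1 ∧ x ≠ 0) →
      treeOrder T = Ordinal.omega0 * Ordinal.omega0 →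
      ∀ ε > (0 : ℝ), ∃ l ∈ T, ∃ a : Fin l.length → ℝ,
        (∑ i, |a i| = 1) ∧ schNorm (∑ i, a i • l.get i) < ε) ∧
    (∀ K : ℝ, 1 ≤ K → ∀ T : Set (List (ℕ →₀ ℝ)),
      (∀ l ∈ T, (∀ x ∈ l, schNorm x = 1) ∧
        ∀ a : Fin l.length → ℝ,
          (1 / K) * ∑ i, |a i| ≤ schNorm (∑ i, a i • l.get i)) →
      treeOrder T < Ordinal.omega0 * Ordinal.omega0) := by
  refine ⟨fun T hT hord ε hε => ?_, fun K hK T hT => ?_⟩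
  · refine exists_absComb_schNorm_lt (fun l hl x hx => (hT l hl x hx).1) (fun n => ?_) hε
    exact derivTreeIter_nonempty_of_lt_treeOrder T (hord ▸ omega0_mul_natCast_lt n)
  by_contra! hord
  have hK0 : 0 < K := one_pos.trans_le hK
  obtain ⟨l, hl, a, ha, hsmall⟩ := exists_absComb_schNorm_lt
    (fun l hl x hx => ((hT l hl).1 x hx).le)
    (fun n => derivTreeIter_nonempty_of_lt_treeOrder T ((omega0_mul_natCast_lt n).trans_le hord))
    (ε := 1 / (2 * K)) (by positivity)
  have hlarge := (hT l hl).2 a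
  rw [ha, mul_one] at hlarge
  have : 1 / (2 * K) < 1 / K := one_div_lt_one_div_of_lt hK0 (by linarith)
  linarith
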